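/- Let β₁ = (3/2)√2 − 2 and β₂ = (√30 − 5)/2. For every x₁ ∈ [β₁, β₂], the number h = √(8x₁ + 54) − x₁ − 7 satisfies h ≥ x₁ and the indifference equation A(x₁,h) = C(x₁,h), i.e. 2 + 2h = min_{t∈[0,1]} G(x₁,h,t). Moreover the two branch formulas agree at β₁: (5 − β₁ − √(β₁² + 6β₁ + 13))/4 = √(8β₁ + 54) − β₁ − 7, and √(8β₂ + 54) − β₂ − 7 = β₂. -/
import Mathlib


/-- Expected final rank in Robbins' problem with 4 observations, first two observations
`x₁, x₂`, third accepted iff `≤ h`, fourth always accepted. -/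
noncomputable def G (x₁ x₂ h : ℝ) : ℝ :=
  3/2 + h^2 - h + (2 - x₁ - x₂) * (1 - h) + max (h - x₁) 0 + max (h - x₂) 0

/-- Optimal expected rank from rejecting the second observation:
`C x₁ x₂ = min_{t ∈ [0,1]} G x₁ x₂ t`. -/
noncomputable def C (x₁ x₂ : ℝ) : ℝ := sInf (G x₁ x₂ '' Set.Icc 0 1)

/-- Expected rank from accepting the second observation `u` given first observation `x`. -/
noncomputable def A (x u : ℝ) : ℝ := 1 + (if x ≤ u then (1:ℝ) else 0) + 2*u

set_option maxHeartbeats 1000000 in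
theorem robbins_n4_h2_branch2 :
    (∀ x₁ ∈ Set.Icc ((3/2) * Real.sqrt 2 - 2) ((Real.sqrt 30 - 5)/2), ∀ h : ℝ,
      h = Real.sqrt (8*x₁ + 54) - x₁ - 7 →
      x₁ ≤ h ∧ A x₁ h = C x₁ h ∧ 2 + 2*h = C x₁ h) ∧
    (5 - ((3/2) * Real.sqrt 2 - 2) -
        Real.sqrt (((3/2) * Real.sqrt 2 - 2)^2 + 6*((3/2) * Real.sqrt 2 - 2) + 13))/4 =
      Real.sqrt (8*((3/2) * Real.sqrt 2 - 2) + 54) - ((3/2) * Real.sqrt 2 - 2) - 7 ∧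
    Real.sqrt (8*((Real.sqrt 30 - 5)/2) + 54) - (Real.sqrt 30 - 5)/2 - 7 =
      (Real.sqrt 30 - 5)/2 := by
  have s2 : Real.sqrt 2 ^ 2 = 2 := Real.sq_sqrt (by norm_num)
  have s2nn : (0:ℝ) ≤ Real.sqrt 2 := Real.sqrt_nonneg 2
  have s30 : Real.sqrt 30 ^ 2 = 30 := Real.sq_sqrt (by norm_num)
  have s30nn : (0:ℝ) ≤ Real.sqrt 30 := Real.sqrt_nonneg 30
  refine ⟨?_, ?_, ?_⟩
  · intro x₁ hx h hh
    obtain ⟨hx1, hx2⟩ := hx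
    have hx0 : 0 ≤ x₁ := by nlinarith
    set s := Real.sqrt (8*x₁ + 54) with hs
    have hsnn : 0 ≤ s := Real.sqrt_nonneg _
    have hssq : s^2 = 8*x₁ + 54 := Real.sq_sqrt (by linarith)
    -- x₁ ≤ h
    have h1 : 4*x₁^2 + 20*x₁ ≤ 5 := by
      nlinarith [mul_nonneg (sub_nonneg.mpr hx2) (show (0:ℝ) ≤ x₁ + (Real.sqrt 30 - 5)/2 + 5 by nlinarith)]
    have hsl : 2*x₁ + 7 ≤ s := by nlinarith [sq_nonneg (s - (2*x₁+7))]
    have hxh : x₁ ≤ h := by rw [hh]; linarith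
    -- 3h ≤ 1 - x₁
    have hb1 : 1 ≤ 2*x₁^2 + 8*x₁ := by
      nlinarith [mul_nonneg (sub_nonneg.mpr hx1) (show (0:ℝ) ≤ x₁ + ((3/2)*Real.sqrt 2 - 2) + 4 by nlinarith)]
    have hsu : 3*s ≤ 22 + 2*x₁ := by nlinarith [sq_nonneg (3*s - (22 + 2*x₁))]
    have hh3 : 3*h ≤ 1 - x₁ := by rw [hh]; linarith
    set t : ℝ := (1 - x₁ - h)/2 with ht
    have hth : h ≤ t := by rw [ht]; linarith
    have htx : x₁ ≤ t := le_trans hxh hth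
    have ht0 : (0:ℝ) ≤ t := le_trans hx0 htx
    have ht1 : t ≤ 1 := by rw [ht]; linarith [le_trans hx0 hxh]
    have hval : G x₁ h t = 2 + 2*h := by
      unfold G
      rw [max_eq_left (by linarith : (0:ℝ) ≤ t - x₁), max_eq_left (by linarith : (0:ℝ) ≤ t - h)]
      rw [ht, hh]
      linear_combination (-1/4 : ℝ) * hssq
    have hbound : ∀ u : ℝ, 2 + 2*h ≤ G x₁ h u := by
      intro u
      unfold G
      have expand : 3/2 + u^2 - u + (2 - x₁ - h)*(1 - u) + (u - x₁) + (u - h) - (2 + 2*h)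
          = (u - t)^2 := by
        rw [ht, hh]; linear_combination (-1/4 : ℝ) * hssq
      linarith [sq_nonneg (u - t), le_max_left (u - x₁) 0, le_max_left (u - h) 0, expand]
    have hmem : (2 + 2*h) ∈ G x₁ h '' Set.Icc 0 1 := ⟨t, ⟨ht0, ht1⟩, hval⟩
    have hC : C x₁ h = 2 + 2*h := by
      unfold C
      apply le_antisymm
      · exact csInf_le ⟨2 + 2*h, by rintro y ⟨u, _, rfl⟩; exact hbound u⟩ hmem
      · exact le_csInf ⟨_, hmem⟩ (by rintro y ⟨u, _, rfl⟩; exact hbound u)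
    refine ⟨hxh, ?_, hC.symm⟩
    unfold A
    rw [if_pos hxh, hC]
    ring
  · have e1 : Real.sqrt (((3/2) * Real.sqrt 2 - 2)^2 + 6*((3/2) * Real.sqrt 2 - 2) + 13)
        = 3 + Real.sqrt 2 / 2 := by
      rw [show ((3/2) * Real.sqrt 2 - 2)^2 + 6*((3/2) * Real.sqrt 2 - 2) + 13
          = (3 + Real.sqrt 2 / 2)^2 by linear_combination 2 * s2]
      exact Real.sqrt_sq (by positivity)
    have e2 : Real.sqrt (8*((3/2) * Real.sqrt 2 - 2) + 54) = 6 + Real.sqrt 2 := by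
      rw [show 8*((3/2) * Real.sqrt 2 - 2) + 54 = (6 + Real.sqrt 2)^2 by linear_combination -s2]
      exact Real.sqrt_sq (by positivity)
    rw [e1, e2]; ring
  · have e3 : Real.sqrt (8*((Real.sqrt 30 - 5)/2) + 54) = Real.sqrt 30 + 2 := by
      rw [show 8*((Real.sqrt 30 - 5)/2) + 54 = (Real.sqrt 30 + 2)^2 by linear_combination -s30]
      exact Real.sqrt_sq (by positivity)
    rw [e3]; ring
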